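/- Let M be a torsion-free abelian group, and let λ, u, v ∈ M. Suppose that for every pair of integers (r,s) there exists an element c(r,s) ∈ M with 2·c(r,s) = 2(6r^2+6r+1)·λ + s^2·(u - v) + (2rs + s - s^2)·u. Then u - v is divisible by 2 in M, i.e. there exists w ∈ M with 2w = u - v. -/

import Mathlib

theorem stmt_2_general (M : Type*) [AddCommGroup M]
    (lam u v : M)
    (hc : ∀ r s : ℤ, ∃ c : M,
      (2 : ℤ) • c = (2 * (6 * r ^ 2 + 6 * r + 1)) • lam + (s ^ 2) • (u - v)
        + (2 * r * s + s - s ^ 2) • u) :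
    ∃ w : M, (2 : ℤ) • w = u - v := by
  obtain ⟨c, hc⟩ := hc 0 1
  have hc : (2 : ℤ) • c = (2 : ℤ) • lam + (u - v) := by simpa using hc
  exact ⟨c - lam, by rw [smul_sub, hc]; abel⟩

/-- Abstract divisibility-by-2 statement (Proposition `DivisibilityBy2`). -/
theorem stmt_2 (M : Type*) [AddCommGroup M]
    (htf : ∀ (n : ℤ) (x : M), n ≠ 0 → n • x = 0 → x = 0)
    (lam u v : M)
    (hc : ∀ r s : ℤ, ∃ c : M,
      (2 : ℤ) • c = (2 * (6 * r ^ 2 + 6 * r + 1)) • lam + (s ^ 2) • (u - v)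
        + (2 * r * s + s - s ^ 2) • u) :
    ∃ w : M, (2 : ℤ) • w = u - v :=
  stmt_2_general M lam u v hc
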